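/- Let G be a finite connected simple graph with n vertices and m edges, w : D(G) → ℍ an arc weight, and W, B_w, J₀, D_w as below. Then for every t ∈ ℂ, det(I_{4m} − t·ψ(ᵀB_w − J₀)) = (1 − t²)^{2m−2n} · det(I_{2n} − t·ψ(ᵀW) + t²·(ψ(D_w) − I_{2n})). -/

import Mathlib

/-!
Put `K e v = w(e)·[o(e) = v]` and `L e v = [t(e) = v]`. Then `ᵀB_w = K·ᵀL`, `ᵀW = ᵀL·K` and
`D_w = ᵀL·J₀·K`, where `J₀` is the permutation matrix of the arc reversal `e ↦ e⁻¹`; as `ψ` is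
multiplicative, the theorem is an identity in matrices `K`, `L` and the permutation matrix `J` of a
fixed-point-free involution. Since `J² = 1`,
`(1 - tJ)(1 - t(KL - J)) = (1 - t²) - t(1 - tJ)K·L`,
and the Sylvester identity `a^|α| det(a - XY) = a^|β| det(a - YX)` moves this to the vertex side,
where it reads `(1 - t²) - tLK + t²LJK`. Pairing each arc with its reversal gives
`det(1 - tJ) = (1 - t²)^(|β|/2)`; this factor is cancelled at the generic point `t = X` of `R[X]`,
where `1 - X²` is a nonzerodivisor, and the identity is then specialised to every `t`.
-/

noncomputable section

open Matrix

/-- Simplex part of a quaternion: `q = Sc q + j * Pc q`. -/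
def Sc (q : Quaternion ℝ) : ℂ := ⟨q.re, q.imI⟩

/-- Perplex part of a quaternion: `q = Sc q + j * Pc q`. -/
def Pc (q : Quaternion ℝ) : ℂ := ⟨q.imJ, -q.imK⟩

/-- The map ψ sending a quaternionic matrix `M = M^S + j·M^P` (symplectic decomposition)
to the complex block matrix `[[M^S, -conj(M^P)], [M^P, conj(M^S)]]`. -/
def psi {I J : Type*} (M : Matrix I J (Quaternion ℝ)) :
    Matrix (I ⊕ I) (J ⊕ J) ℂ :=
  Matrix.fromBlocks (M.map Sc) (-((M.map Pc).map (starRingEnd ℂ)))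
    (M.map Pc) ((M.map Sc).map (starRingEnd ℂ))

variable {V : Type*}

/-- The quaternionic weighted matrix W: `W u v = w((u,v))` if `(u,v)` is an arc, else 0. -/
def quatWeightMatrix [Fintype V] [DecidableEq V] (G : SimpleGraph V) [DecidableRel G.Adj]
    (w : G.Dart → Quaternion ℝ) : Matrix V V (Quaternion ℝ) := fun u v =>
  if h : G.Adj u v then w ⟨(u, v), h⟩ else 0

/-- The quaternionic weighted arc matrix B_w: `(B_w) e f = w(f)` if `t(e) = o(f)`, else 0. -/
def quatArcMatrix [Fintype V] [DecidableEq V] (G : SimpleGraph V) [DecidableRel G.Adj]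
    (w : G.Dart → Quaternion ℝ) : Matrix G.Dart G.Dart (Quaternion ℝ) := fun e f =>
  if e.toProd.2 = f.toProd.1 then w f else 0

/-- The quaternionic arc-inversion matrix J₀: `(J₀) e f = 1` if `f = e⁻¹`, else 0. -/
def quatArcInvMatrix [Fintype V] [DecidableEq V] (G : SimpleGraph V) [DecidableRel G.Adj] :
    Matrix G.Dart G.Dart (Quaternion ℝ) := fun e f =>
  if f = e.symm then 1 else 0

/-- The quaternionic weighted degree matrix D_w: diagonal with
`(D_w)_{uu} = Σ_{e : o(e) = u} w(e)`. -/
def quatDegMatrix [Fintype V] [DecidableEq V] (G : SimpleGraph V) [DecidableRel G.Adj]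
    (w : G.Dart → Quaternion ℝ) : Matrix V V (Quaternion ℝ) :=
  Matrix.diagonal fun u => ∑ e : G.Dart, if e.toProd.1 = u then w e else 0

/-- The 2m×n matrix K: `K e v = w(e)` if `o(e) = v`, else 0. -/
def quatKMatrix [Fintype V] [DecidableEq V] (G : SimpleGraph V) [DecidableRel G.Adj]
    (w : G.Dart → Quaternion ℝ) : Matrix G.Dart V (Quaternion ℝ) := fun e v =>
  if e.toProd.1 = v then w e else 0

/-- The 2m×n matrix L: `L e v = 1` if `t(e) = v`, else 0. -/
def quatLMatrix [Fintype V] [DecidableEq V] (G : SimpleGraph V) [DecidableRel G.Adj] :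
    Matrix G.Dart V (Quaternion ℝ) := fun e v =>
  if e.toProd.2 = v then 1 else 0

namespace Equiv.Perm

variable {β : Type*} (σ : Perm β) (p : β → Prop) [DecidablePred p]

def sumEquivOfSwapsCompl (hp : ∀ x, p x ↔ ¬ p (σ x)) : {x // p x} ⊕ {x // p x} ≃ β :=
  ((Equiv.refl _).sumCongr (σ.subtypeEquiv hp)).trans (Equiv.sumCompl p)

theorem card_eq_two_mul_of_swaps_compl [Fintype β] (hp : ∀ x, p x ↔ ¬ p (σ x)) :
    Fintype.card β = 2 * Fintype.card {x // p x} := by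
  rw [← Fintype.card_congr (sumEquivOfSwapsCompl σ p hp), Fintype.card_sum, two_mul]

theorem exists_swaps_compl [Fintype β] (hσ : Function.Involutive σ) (hfix : ∀ x, σ x ≠ x) :
    ∃ q : β → Prop, ∀ x, q x ↔ ¬ q (σ x) := by
  let f := Fintype.equivFin β
  refine ⟨fun x => f x < f (σ x), fun x => ?_⟩
  have hne : f x ≠ f (σ x) := f.injective.ne (hfix x).symm
  simp only [hσ x, not_lt]
  omega

variable {R : Type*} [CommRing R] [DecidableEq β]

theorem submatrix_one_sub_smul_permMatrix (hp : ∀ x, p x ↔ ¬ p (σ x))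
    (hσ : Function.Involutive σ) (t : R) :
    (1 - t • σ.permMatrix R).submatrix (sumEquivOfSwapsCompl σ p hp)
        (sumEquivOfSwapsCompl σ p hp) = fromBlocks 1 (-t • 1) (-t • 1) 1 := by
  have hne : ∀ x y, p x → p y → σ x ≠ y := fun x y hx hy h => (hp x).1 hx (h ▸ hy)
  ext (⟨x, hx⟩ | ⟨x, hx⟩) (⟨y, hy⟩ | ⟨y, hy⟩) <;>
    simp [sumEquivOfSwapsCompl, PEquiv.toMatrix_apply, Matrix.one_apply, hσ x,
      hσ.injective.eq_iff, hne x y hx hy, (hne y x hy hx).symm]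

theorem det_one_sub_smul_permMatrix [Fintype β] (hp : ∀ x, p x ↔ ¬ p (σ x))
    (hσ : Function.Involutive σ) (t : R) :
    (1 - t • σ.permMatrix R).det = (1 - t ^ 2) ^ Fintype.card {x // p x} := by
  have hscalar : (1 : Matrix {x // p x} {x // p x} R) - t ^ 2 • 1 = (1 - t ^ 2) • 1 := by
    rw [sub_smul, one_smul]
  rw [← det_submatrix_equiv_self (sumEquivOfSwapsCompl σ p hp),
    submatrix_one_sub_smul_permMatrix σ p hp hσ, det_fromBlocks_one₁₁, smul_mul_smul_comm,
    Matrix.one_mul, neg_mul_neg, ← sq, hscalar, det_smul, det_one, mul_one]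

end Equiv.Perm

namespace Matrix

variable {R : Type*} [CommRing R] {α β : Type*} [Fintype α] [Fintype β] [DecidableEq α]
  [DecidableEq β]

theorem pow_card_mul_det_scalar_sub_mul_comm (A : Matrix β α R) (B : Matrix α β R) (a : R) :
    a ^ Fintype.card α * (scalar β a - A * B).det =
      a ^ Fintype.card β * (scalar α a - B * A).det := by
  simpa [eval_charpoly] using congr_arg (Polynomial.eval a) (charpoly_mul_comm' A B)

theorem det_one_sub_smul_mul_pow_card_mul_det_one_sub_smul_mul_sub {J : Matrix β β R}
    (hJ : J * J = 1) (K : Matrix β α R) (L : Matrix α β R) (t : R) :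
    (1 - t • J).det * ((1 - t ^ 2) ^ Fintype.card α * (1 - t • (K * L - J)).det) =
      (1 - t ^ 2) ^ Fintype.card β * (1 - t • (L * K) + t ^ 2 • (L * J * K - 1)).det := by
  have hβ : (1 - t • J) * (1 - t • (K * L - J)) =
      scalar β (1 - t ^ 2) - ((1 - t • J) * K) * (t • L) := by
    simp only [Matrix.mul_sub, Matrix.sub_mul, Matrix.mul_smul, Matrix.smul_mul, Matrix.mul_one,
      Matrix.one_mul, smul_sub, smul_smul, hJ, Matrix.mul_assoc, scalar_apply,
      ← smul_one_eq_diagonal]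
    module
  have hα : scalar α (1 - t ^ 2) - (t • L) * ((1 - t • J) * K) =
      1 - t • (L * K) + t ^ 2 • (L * J * K - 1) := by
    simp only [Matrix.mul_sub, Matrix.sub_mul, Matrix.mul_smul, Matrix.smul_mul,
      Matrix.one_mul, smul_sub, smul_smul, Matrix.mul_assoc, scalar_apply, ← smul_one_eq_diagonal]
    module
  rw [mul_left_comm, ← det_mul, hβ, pow_card_mul_det_scalar_sub_mul_comm, hα]

theorem pow_card_mul_det_one_sub_smul_mul_sub_permMatrix_of_isRegular {σ : Equiv.Perm β}
    (hσ : Function.Involutive σ) (hfix : ∀ x, σ x ≠ x) (K : Matrix β α R) (L : Matrix α β R)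
    {t : R} (ht : IsRegular (1 - t ^ 2)) :
    (1 - t ^ 2) ^ Fintype.card α * (1 - t • (K * L - σ.permMatrix R)).det =
      (1 - t ^ 2) ^ (Fintype.card β / 2) *
        (1 - t • (L * K) + t ^ 2 • (L * σ.permMatrix R * K - 1)).det := by
  classical
  obtain ⟨p, hp⟩ := σ.exists_swaps_compl hσ hfix
  have hJ : σ.permMatrix R * σ.permMatrix R = 1 := by
    rw [← permMatrix_mul, show σ * σ = 1 from Equiv.ext hσ, permMatrix_one]
  have key := det_one_sub_smul_mul_pow_card_mul_det_one_sub_smul_mul_sub hJ K L t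
  rw [σ.det_one_sub_smul_permMatrix p hp hσ, σ.card_eq_two_mul_of_swaps_compl p hp, two_mul,
    pow_add, mul_assoc] at key
  rw [σ.card_eq_two_mul_of_swaps_compl p hp, Nat.mul_div_cancel_left _ two_pos]
  exact (ht.pow _).left key

open Polynomial in
theorem pow_card_mul_det_one_sub_smul_mul_sub_permMatrix {σ : Equiv.Perm β}
    (hσ : Function.Involutive σ) (hfix : ∀ x, σ x ≠ x) (K : Matrix β α R) (L : Matrix α β R)
    (t : R) :
    (1 - t ^ 2) ^ Fintype.card α * (1 - t • (K * L - σ.permMatrix R)).det =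
      (1 - t ^ 2) ^ (Fintype.card β / 2) *
        (1 - t • (L * K) + t ^ 2 • (L * σ.permMatrix R * K - 1)).det := by
  have hX : IsRegular (1 - X ^ 2 : R[X]) := by
    rw [← neg_sub, ← neg_one_mul]
    exact isUnit_neg_one.isRegular.mul (monic_X_pow_sub_C (1 : R) two_ne_zero).isRegular
  set φ := evalRingHom t
  have hP : (σ.permMatrix R[X]).map φ = σ.permMatrix R := by
    ext i j
    by_cases h : σ i = j <;> simp [φ, PEquiv.toMatrix_apply, h]
  have generic := congr_arg φ <|
    pow_card_mul_det_one_sub_smul_mul_sub_permMatrix_of_isRegular hσ hfix (K.map C) (L.map C) hX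
  simp only [map_mul, map_pow, map_sub, map_one, RingHom.map_det, RingHom.mapMatrix_apply,
    Matrix.map_sub _ (map_sub φ), Matrix.map_add _ (map_add φ), Matrix.map_mul,
    Matrix.map_smul' _ _ _ (map_mul φ), Matrix.map_one _ (map_zero φ) (map_one φ), hP] at generic
  simpa [φ, Function.comp_def] using generic

end Matrix

section Symplectic

theorem Sc_mul (p q : Quaternion ℝ) :
    Sc (p * q) = Sc p * Sc q - starRingEnd ℂ (Pc p) * Pc q := by
  simp only [Sc, Pc, Complex.ext_iff, Quaternion.re_mul, Quaternion.imI_mul, Complex.mul_re,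
    Complex.mul_im, Complex.sub_re, Complex.sub_im, Complex.conj_re, Complex.conj_im]
  constructor <;> ring

theorem Pc_mul (p q : Quaternion ℝ) :
    Pc (p * q) = Pc p * Sc q + starRingEnd ℂ (Sc p) * Pc q := by
  simp only [Sc, Pc, Complex.ext_iff, Quaternion.imJ_mul, Quaternion.imK_mul, Complex.mul_re,
    Complex.mul_im, Complex.add_re, Complex.add_im, Complex.conj_re, Complex.conj_im]
  constructor <;> ring

@[simps]
def scAddHom : Quaternion ℝ →+ ℂ where
  toFun := Sc
  map_zero' := by simp [Sc, Complex.ext_iff, Quaternion.re_zero, Quaternion.imI_zero]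
  map_add' p q := by simp [Sc, Complex.ext_iff]

@[simps]
def pcAddHom : Quaternion ℝ →+ ℂ where
  toFun := Pc
  map_zero' := by simp [Pc, Complex.ext_iff, Quaternion.imJ_zero, Quaternion.imK_zero]
  map_add' p q := by simp [Pc, Complex.ext_iff, add_comm]

variable {I J K : Type*}

theorem map_Sc_mul [Fintype J] (M : Matrix I J (Quaternion ℝ))
    (N : Matrix J K (Quaternion ℝ)) :
    (M * N).map Sc = M.map Sc * N.map Sc - (M.map Pc).map (starRingEnd ℂ) * N.map Pc := by
  ext i k
  refine (map_sum scAddHom _ _).trans ?_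
  simp [Sc_mul, mul_apply, Finset.sum_sub_distrib]

theorem map_Pc_mul [Fintype J] (M : Matrix I J (Quaternion ℝ))
    (N : Matrix J K (Quaternion ℝ)) :
    (M * N).map Pc = M.map Pc * N.map Sc + (M.map Sc).map (starRingEnd ℂ) * N.map Pc := by
  ext i k
  refine (map_sum pcAddHom _ _).trans ?_
  simp [Pc_mul, mul_apply, Finset.sum_add_distrib]

theorem psi_mul [Fintype J] (M : Matrix I J (Quaternion ℝ)) (N : Matrix J K (Quaternion ℝ)) :
    psi (M * N) = psi M * psi N := by
  simp only [psi, fromBlocks_multiply, map_Sc_mul, map_Pc_mul, Matrix.map_sub _ (map_sub _),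
    Matrix.map_add _ (map_add _), Matrix.map_mul, Matrix.map_map, Function.comp_def,
    Complex.conj_conj, Matrix.mul_neg, Matrix.neg_mul]
  congr 1 <;> abel

theorem psi_sub (M N : Matrix I J (Quaternion ℝ)) : psi (M - N) = psi M - psi N := by
  ext (i | i) (j | j) <;> simp [psi, Sc, Pc, Complex.ext_iff, neg_add_eq_sub]

theorem psi_permMatrix [DecidableEq I] (σ : Equiv.Perm I) :
    psi (σ.permMatrix (Quaternion ℝ)) = (σ.sumCongr σ).permMatrix ℂ := by
  ext (i | i) (j | j) <;> by_cases h : σ i = j <;>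
    simp [psi, PEquiv.toMatrix_apply, h, Sc, Pc, Complex.ext_iff, Quaternion.re_one,
      Quaternion.imI_one, Quaternion.imJ_one, Quaternion.imK_one, Quaternion.re_zero,
      Quaternion.imI_zero, Quaternion.imJ_zero, Quaternion.imK_zero]

end Symplectic

def SimpleGraph.dartSymmPerm (G : SimpleGraph V) : Equiv.Perm G.Dart :=
  Function.Involutive.toPerm _ SimpleGraph.Dart.symm_involutive

section Factorization

variable [Fintype V] [DecidableEq V] (G : SimpleGraph V) [DecidableRel G.Adj]
  (w : G.Dart → Quaternion ℝ)

theorem quatArcInvMatrix_eq_permMatrix :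
    quatArcInvMatrix G = G.dartSymmPerm.permMatrix (Quaternion ℝ) := by
  refine Matrix.ext fun e f => ?_
  simp [quatArcInvMatrix, SimpleGraph.dartSymmPerm, PEquiv.toMatrix_apply, eq_comm]

theorem quatArcMatrix_transpose :
    (quatArcMatrix G w)ᵀ = quatKMatrix G w * (quatLMatrix G)ᵀ := by
  refine Matrix.ext fun e f => ?_
  simp [quatArcMatrix, quatKMatrix, quatLMatrix, mul_apply, eq_comm]

theorem quatWeightMatrix_transpose :
    (quatWeightMatrix G w)ᵀ = (quatLMatrix G)ᵀ * quatKMatrix G w := by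
  refine Matrix.ext fun u v => ?_
  simp only [transpose_apply, quatWeightMatrix, quatKMatrix, quatLMatrix, mul_apply, ite_mul,
    one_mul, zero_mul, ← ite_and]
  by_cases h : G.Adj v u
  · rw [dif_pos h, Fintype.sum_eq_single (⟨(v, u), h⟩ : G.Dart)]
    · simp
    · refine fun e he => if_neg ?_
      rintro ⟨h1, h2⟩
      exact he (SimpleGraph.Dart.ext _ _ (Prod.ext h2 h1))
  · rw [dif_neg h]
    refine (Finset.sum_eq_zero fun e _ => if_neg ?_).symm
    rintro ⟨rfl, rfl⟩
    exact h e.adj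

theorem quatDegMatrix_eq :
    quatDegMatrix G w = (quatLMatrix G)ᵀ * quatArcInvMatrix G * quatKMatrix G w := by
  rw [quatArcInvMatrix_eq_permMatrix, PEquiv.mul_toMatrix_toPEquiv]
  refine Matrix.ext fun u v => ?_
  simp only [quatDegMatrix, diagonal_apply, SimpleGraph.dartSymmPerm,
    Function.Involutive.toPerm_symm, Function.Involutive.coe_toPerm, mul_apply, submatrix_apply,
    id_eq, transpose_apply, quatLMatrix, SimpleGraph.Dart.symm_toProd, Prod.snd_swap,
    quatKMatrix, mul_ite, ite_mul, one_mul, zero_mul, mul_zero]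
  by_cases h : u = v
  · subst h
    rw [if_pos rfl]
    exact Finset.sum_congr rfl fun e _ => by split_ifs <;> rfl
  · rw [if_neg h]
    exact (Finset.sum_eq_zero fun e _ => by grind).symm

end Factorization

theorem quat_det_formula_general [Fintype V] [DecidableEq V] (G : SimpleGraph V)
    [DecidableRel G.Adj] (n m : ℕ) (hn : n = Fintype.card V)
    (hm : m = G.edgeFinset.card) (w : G.Dart → Quaternion ℝ) :
    ∀ t : ℂ,
      (1 - t ^ 2) ^ (2 * n) *
          ((1 : Matrix (G.Dart ⊕ G.Dart) (G.Dart ⊕ G.Dart) ℂ) -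
            t • psi ((quatArcMatrix G w)ᵀ - quatArcInvMatrix G)).det =
        (1 - t ^ 2) ^ (2 * m) *
          ((1 : Matrix (V ⊕ V) (V ⊕ V) ℂ) - t • psi ((quatWeightMatrix G w)ᵀ) +
            t ^ 2 • (psi (quatDegMatrix G w) - 1)).det := by
  intro t
  set σ := G.dartSymmPerm.sumCongr G.dartSymmPerm
  have hσ : Function.Involutive σ := by rintro (e | e) <;> simp [σ, SimpleGraph.dartSymmPerm]
  have hfix : ∀ x, σ x ≠ x := by
    rintro (e | e) <;> simp [σ, SimpleGraph.dartSymmPerm, e.symm_ne]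
  have hV : Fintype.card (V ⊕ V) = 2 * n := by rw [Fintype.card_sum, hn, two_mul]
  have hD : Fintype.card (G.Dart ⊕ G.Dart) / 2 = 2 * m := by
    rw [Fintype.card_sum, G.dart_card_eq_twice_card_edges, ← hm]
    omega
  have key := pow_card_mul_det_one_sub_smul_mul_sub_permMatrix hσ hfix
    (psi (quatKMatrix G w)) (psi (quatLMatrix G)ᵀ) t
  rw [hV, hD] at key
  rw [quatArcMatrix_transpose, quatWeightMatrix_transpose, quatDegMatrix_eq,
    quatArcInvMatrix_eq_permMatrix, psi_sub, psi_mul, psi_mul, psi_mul, psi_mul, psi_permMatrix]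
  exact key

/-- Theorem 5.1: for every t ∈ ℂ,
det(I_{4m} − tψ(ᵀB_w − J₀)) = (1−t²)^{2m−2n}·det(I_{2n} − tψ(ᵀW) + t²(ψ(D_w) − I_{2n}))
(stated multiplied through by (1−t²)^{2n} to avoid negative exponents). -/
theorem quat_det_formula [Fintype V] [DecidableEq V] (G : SimpleGraph V)
    [DecidableRel G.Adj] (hG : G.Connected) (n m : ℕ) (hn : n = Fintype.card V)
    (hm : m = G.edgeFinset.card) (w : G.Dart → Quaternion ℝ) :
    ∀ t : ℂ,
      (1 - t ^ 2) ^ (2 * n) *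
          ((1 : Matrix (G.Dart ⊕ G.Dart) (G.Dart ⊕ G.Dart) ℂ) -
            t • psi ((quatArcMatrix G w)ᵀ - quatArcInvMatrix G)).det =
        (1 - t ^ 2) ^ (2 * m) *
          ((1 : Matrix (V ⊕ V) (V ⊕ V) ℂ) - t • psi ((quatWeightMatrix G w)ᵀ) +
            t ^ 2 • (psi (quatDegMatrix G w) - 1)).det :=
  quat_det_formula_general G n m hn hm w
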